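/- arXiv:2011.09245 — 2 statements merged into one kernel-verified Lean document; each statement's English description precedes it below -/
import Mathlib

section
/- Let ω ∈ ℝ^d satisfy the diophantine condition and set Θ := {n·ω : n ∈ ℤ^d} (which is a frequency set, and the map n ↦ n·ω is injective). Let w : Θ → [0,∞) be a weight such that for every N ≥ 0 there is C_N > 0 with w(n·ω) ≤ C_N ⟨n⟩^{−N} for all n ∈ ℤ^d. Then for every k ≥ 0 the sum ∑_{θ ∈ Θ^k} s_k(θ) is finite, where s_k is computed with the weight w. -/
open scoped BigOperators

/-! By induction on `k`, `n ↦ s_k(n₁·ω, …, n_k·ω)` decays faster than any power of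
`∏ ⟨nᵢ⟩`. For `k = 1` this is the decay of the weight; the block products in the recursion
preserve it; and the small divisor `|∑ nᵢ·ω|⁻¹` costs only the fixed power
`⟨∑ nᵢ⟩^⌈μ⌉ ≤ 2^(k⌈μ⌉) ∏ ⟨nᵢ⟩^⌈μ⌉` by the diophantine condition. Decay of order `2d` in each
variable is summable over `(ℤ^d)^k`, because `⟨n⟩^(-2d) ≤ ∏ⱼ (1 + nⱼ²)⁻¹`. -/

/-- The recursively defined quantities `s_k` associated to a weight `w`.
`sW w k θ` is `s_k(θ)` where `θ ∈ ℝ^k`. -/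
noncomputable def sW (w : ℝ → ℝ) : (k : ℕ) → (Fin k → ℝ) → ℝ
  | 0, _ => 1
  | 1, θ => if θ 0 = 0 then 0 else w (θ 0) / |θ 0|
  | (k+2), θ =>
    if (∑ i, θ i) = 0 then 0
    else |∑ i, θ i|⁻¹ *
      ∑ p : Equiv.Perm (Fin (k+2)), ∑ c : Composition (k+2),
        if h : ∀ i : Fin c.length, 2 * c.blocksFun i ≤ k + 2 then
          ∏ i : Fin c.length, sW w (c.blocksFun i) (fun j => θ (p (c.embedding i j)))
        else 0
termination_by k => k
decreasing_by
  have := h i; omega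

open Finset

-- Since `0⁻¹ = 0`, these also hold where the sum vanishes and `sW` is defined to be `0`.

theorem sW_one (w : ℝ → ℝ) (θ : Fin 1 → ℝ) : sW w 1 θ = |θ 0|⁻¹ * w (θ 0) := by
  rw [sW]
  split_ifs with h
  · simp [h]
  · rw [div_eq_inv_mul]

theorem sW_add_two (w : ℝ → ℝ) (k : ℕ) (θ : Fin (k + 2) → ℝ) :
    sW w (k + 2) θ = |∑ i, θ i|⁻¹ * ∑ p : Equiv.Perm (Fin (k + 2)),
      ∑ c ∈ univ.filter (fun c : Composition (k + 2) => ∀ i, 2 * c.blocksFun i ≤ k + 2),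
        ∏ i, sW w (c.blocksFun i) (fun j => θ (p (c.embedding i j))) := by
  rw [sW]
  split_ifs with h
  · simp [h]
  · simp only [sum_filter, dite_eq_ite]

section JapaneseBracket

variable {d : ℕ}

noncomputable def japaneseBracket (n : Fin d → ℤ) : ℝ := √(1 + ∑ j, (n j : ℝ) ^ 2)

theorem one_le_japaneseBracket (n : Fin d → ℤ) : 1 ≤ japaneseBracket n :=
  Real.one_le_sqrt.2 (le_add_of_nonneg_right (by positivity))

theorem japaneseBracket_pos (n : Fin d → ℤ) : 0 < japaneseBracket n :=
  one_pos.trans_le (one_le_japaneseBracket n)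

theorem prod_japaneseBracket_pow_pos {ι : Type*} (s : Finset ι) (n : ι → Fin d → ℤ) (M : ℕ) :
    0 < ∏ i ∈ s, japaneseBracket (n i) ^ M :=
  prod_pos fun _ _ => pow_pos (japaneseBracket_pos _) _

@[simp]
theorem japaneseBracket_zero : japaneseBracket (0 : Fin d → ℤ) = 1 := by
  simp [japaneseBracket]

theorem japaneseBracket_add_le (a b : Fin d → ℤ) :
    japaneseBracket (a + b) ≤ 2 * japaneseBracket a * japaneseBracket b := by
  have hsq : ∑ j, ((a + b) j : ℝ) ^ 2 ≤ 2 * ∑ j, (a j : ℝ) ^ 2 + 2 * ∑ j, (b j : ℝ) ^ 2 := by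
    simp only [mul_sum, ← sum_add_distrib]
    refine sum_le_sum fun j _ => ?_
    push_cast [Pi.add_apply]
    nlinarith [sq_nonneg ((a j : ℝ) - b j)]
  have hA : 0 ≤ ∑ j, (a j : ℝ) ^ 2 := by positivity
  have hB : 0 ≤ ∑ j, (b j : ℝ) ^ 2 := by positivity
  unfold japaneseBracket
  rw [Real.sqrt_le_left (by positivity), mul_pow, mul_pow, Real.sq_sqrt (by positivity),
    Real.sq_sqrt (by positivity)]
  nlinarith

theorem japaneseBracket_sum_le {ι : Type*} (s : Finset ι) (n : ι → Fin d → ℤ) :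
    japaneseBracket (∑ i ∈ s, n i) ≤ 2 ^ s.card * ∏ i ∈ s, japaneseBracket (n i) := by
  classical
  induction s using Finset.induction_on with
  | empty => simp
  | insert a s ha ih =>
    rw [sum_insert ha, prod_insert ha, card_insert_of_notMem ha, pow_succ]
    calc japaneseBracket (n a + ∑ i ∈ s, n i)
        ≤ 2 * japaneseBracket (n a) * japaneseBracket (∑ i ∈ s, n i) := japaneseBracket_add_le _ _
      _ ≤ 2 * japaneseBracket (n a) * (2 ^ s.card * ∏ i ∈ s, japaneseBracket (n i)) := by
        gcongr
        exact mul_nonneg zero_le_two (japaneseBracket_pos _).le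
      _ = _ := by ring

end JapaneseBracket

theorem summable_pi_prod {ι : Type*} {g : ι → ℝ} (hg0 : 0 ≤ g) (hg : Summable g) (k : ℕ) :
    Summable fun n : Fin k → ι => ∏ i, g (n i) := by
  induction k with
  | zero => exact .of_finite
  | succ k ih =>
    have hprod : Summable fun q : ι × (Fin k → ι) => g q.1 * ∏ i, g (q.2 i) :=
      Summable.mul_of_nonneg (f := g) (g := fun n : Fin k → ι => ∏ i, g (n i)) hg ih hg0
        fun n => prod_nonneg fun i _ => hg0 _
    have hcons : Summable ((fun n : Fin (k + 1) → ι => ∏ i, g (n i)) ∘ Fin.consEquiv fun _ => ι) :=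
      hprod.congr fun q => by simp [Fin.prod_univ_succ]
    exact (Fin.consEquiv fun _ => ι).summable_iff.1 hcons

theorem summable_inv_one_add_sq_int : Summable fun a : ℤ => (1 + (a : ℝ) ^ 2)⁻¹ := by
  refine Summable.of_norm_bounded_eventually (Real.summable_one_div_int_pow.2 one_lt_two) ?_
  filter_upwards [(Set.finite_singleton (0 : ℤ)).compl_mem_cofinite] with a ha
  have ha : (0 : ℝ) < (a : ℝ) ^ 2 := by
    have : (a : ℝ) ≠ 0 := Int.cast_ne_zero.2 ha
    positivity
  rw [Real.norm_of_nonneg (by positivity), one_div]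
  exact inv_anti₀ ha (by linarith)

theorem summable_inv_japaneseBracket_pow (d : ℕ) :
    Summable fun n : Fin d → ℤ => (japaneseBracket n ^ (2 * d))⁻¹ := by
  refine (summable_pi_prod (fun a => by positivity) summable_inv_one_add_sq_int d).of_nonneg_of_le
    (fun n => by have := japaneseBracket_pos n; positivity) fun n => ?_
  rw [prod_inv_distrib]
  refine inv_anti₀ (prod_pos fun j _ => by positivity) ?_
  rw [pow_mul, japaneseBracket, Real.sq_sqrt (by positivity)]
  calc ∏ j, (1 + (n j : ℝ) ^ 2) ≤ ∏ _j : Fin d, (1 + ∑ i, (n i : ℝ) ^ 2) :=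
        prod_le_prod (fun j _ => by positivity) fun j _ =>
          add_le_add_right (single_le_sum (fun i _ => sq_nonneg (n i : ℝ)) (mem_univ j)) 1
    _ = _ := by simp

section Diophantine

variable {d : ℕ} {ω : Fin d → ℝ} {c μ : ℝ}

noncomputable def latticeDot (ω : Fin d → ℝ) : (Fin d → ℤ) →+ ℝ where
  toFun n := ∑ j, (n j : ℝ) * ω j
  map_zero' := by simp
  map_add' a b := by simp [add_mul, sum_add_distrib]

def IsDiophantine (ω : Fin d → ℝ) (c μ : ℝ) : Prop :=
  0 < c ∧ 0 < μ ∧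
    ∀ n : Fin d → ℤ, n ≠ 0 → c * √(∑ i, (n i : ℝ) ^ 2) ^ (-μ) < |latticeDot ω n|

theorem IsDiophantine.latticeDot_injective (hω : IsDiophantine ω c μ) :
    Function.Injective (latticeDot ω) := by
  obtain ⟨hc, -, hdio⟩ := hω
  refine (injective_iff_map_eq_zero _).2 fun n hn => ?_
  by_contra hne
  have := hdio n hne
  rw [hn, abs_zero] at this
  exact this.not_ge (by positivity)

theorem IsDiophantine.inv_abs_latticeDot_le (hω : IsDiophantine ω c μ) (n : Fin d → ℤ) :
    |latticeDot ω n|⁻¹ ≤ c⁻¹ * japaneseBracket n ^ ⌈μ⌉₊ := by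
  obtain ⟨hc, hμ, hdio⟩ := hω
  have hrhs : 0 ≤ c⁻¹ * japaneseBracket n ^ ⌈μ⌉₊ :=
    mul_nonneg (inv_nonneg.2 hc.le) (pow_nonneg (japaneseBracket_pos n).le _)
  rcases eq_or_ne n 0 with rfl | hn
  · simpa using hrhs
  obtain ⟨j, hj⟩ := Function.ne_iff.1 hn
  have hr : 0 < √(∑ i, (n i : ℝ) ^ 2) := by
    refine Real.sqrt_pos.2 (lt_of_lt_of_le ?_ (single_le_sum (fun i _ => sq_nonneg (n i : ℝ))
      (mem_univ j)))
    have : (n j : ℝ) ≠ 0 := Int.cast_ne_zero.2 hj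
    positivity
  calc |latticeDot ω n|⁻¹ ≤ (c * √(∑ i, (n i : ℝ) ^ 2) ^ (-μ))⁻¹ :=
        inv_anti₀ (by positivity) (hdio n hn).le
    _ = c⁻¹ * √(∑ i, (n i : ℝ) ^ 2) ^ μ := by rw [mul_inv, Real.rpow_neg hr.le, inv_inv]
    _ ≤ c⁻¹ * japaneseBracket n ^ μ := by
        gcongr
        exact Real.sqrt_le_sqrt (le_add_of_nonneg_left zero_le_one)
    _ ≤ c⁻¹ * japaneseBracket n ^ (⌈μ⌉₊ : ℝ) := by
        gcongr
        · exact one_le_japaneseBracket n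
        · exact Nat.le_ceil μ
    _ = c⁻¹ * japaneseBracket n ^ ⌈μ⌉₊ := by rw [Real.rpow_natCast]

end Diophantine

section RapidDecay

variable {d k : ℕ}

def RapidlyDecreasing (f : (Fin k → Fin d → ℤ) → ℝ) : Prop :=
  ∀ M : ℕ, ∃ C : ℝ, ∀ n, |f n| * ∏ i, japaneseBracket (n i) ^ M ≤ C

namespace RapidlyDecreasing

theorem summable {f : (Fin k → Fin d → ℤ) → ℝ} (hf : RapidlyDecreasing f) : Summable f := by
  obtain ⟨C, hC⟩ := hf (2 * d)
  refine .of_norm_bounded ((summable_pi_prod (fun m => ?_) (summable_inv_japaneseBracket_pow d)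
    k).mul_left C) fun n => ?_
  · exact inv_nonneg.2 (pow_nonneg (japaneseBracket_pos m).le _)
  rw [Real.norm_eq_abs, prod_inv_distrib, ← div_eq_mul_inv,
    le_div_iff₀ (prod_japaneseBracket_pow_pos _ _ _)]
  exact hC n

theorem sum {ι : Type*} (s : Finset ι) {f : ι → (Fin k → Fin d → ℤ) → ℝ}
    (hf : ∀ i ∈ s, RapidlyDecreasing (f i)) : RapidlyDecreasing fun n => ∑ i ∈ s, f i n := by
  intro M
  choose C hC using fun i (hi : i ∈ s) => hf i hi M
  refine ⟨∑ i ∈ s.attach, C i i.2, fun n => ?_⟩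
  calc |∑ i ∈ s, f i n| * ∏ l, japaneseBracket (n l) ^ M
      ≤ (∑ i ∈ s, |f i n|) * ∏ l, japaneseBracket (n l) ^ M := by
        gcongr
        · exact (prod_japaneseBracket_pow_pos _ _ _).le
        · exact abs_sum_le_sum_abs _ _
    _ = ∑ i ∈ s.attach, |f i n| * ∏ l, japaneseBracket (n l) ^ M := by
        rw [sum_mul, ← sum_attach]
    _ ≤ _ := sum_le_sum fun i _ => hC i i.2 n

theorem comp_perm {f : (Fin k → Fin d → ℤ) → ℝ} (hf : RapidlyDecreasing f)
    (p : Equiv.Perm (Fin k)) : RapidlyDecreasing fun n => f (n ∘ p) := by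
  intro M
  obtain ⟨C, hC⟩ := hf M
  refine ⟨C, fun n => ?_⟩
  simpa only [Function.comp_apply, Equiv.prod_comp p fun l => japaneseBracket (n l) ^ M]
    using hC (n ∘ p)

theorem prod_blocks {c : Composition k} {f : (b : ℕ) → (Fin b → Fin d → ℤ) → ℝ}
    (hf : ∀ i, RapidlyDecreasing (f (c.blocksFun i))) :
    RapidlyDecreasing fun n => ∏ i, f (c.blocksFun i) fun j => n (c.embedding i j) := by
  intro M
  choose C hC using fun i => hf i M
  refine ⟨∏ i, C i, fun n => ?_⟩
  rw [abs_prod, ← c.prod_prod_apply_embedding, ← prod_mul_distrib]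
  exact prod_le_prod (fun i _ => mul_nonneg (abs_nonneg _)
    (prod_japaneseBracket_pow_pos _ _ _).le) fun i _ => hC i _

theorem inv_abs_latticeDot_mul {ω : Fin d → ℝ} {c μ : ℝ} (hω : IsDiophantine ω c μ)
    {f : (Fin k → Fin d → ℤ) → ℝ} (hf : RapidlyDecreasing f) :
    RapidlyDecreasing fun n => |∑ i, latticeDot ω (n i)|⁻¹ * f n := by
  intro M
  obtain ⟨C, hC⟩ := hf (M + ⌈μ⌉₊)
  refine ⟨c⁻¹ * 2 ^ (k * ⌈μ⌉₊) * C, fun n => ?_⟩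
  have hc : 0 ≤ c⁻¹ := inv_nonneg.2 hω.1.le
  have hinv : |∑ i, latticeDot ω (n i)|⁻¹ ≤ c⁻¹ * 2 ^ (k * ⌈μ⌉₊) *
      ∏ i, japaneseBracket (n i) ^ ⌈μ⌉₊ := by
    rw [← map_sum]
    calc _ ≤ c⁻¹ * japaneseBracket (∑ i, n i) ^ ⌈μ⌉₊ := hω.inv_abs_latticeDot_le _
      _ ≤ c⁻¹ * (2 ^ k * ∏ i, japaneseBracket (n i)) ^ ⌈μ⌉₊ := by
        gcongr
        · exact (japaneseBracket_pos _).le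
        · simpa using japaneseBracket_sum_le univ n
      _ = _ := by rw [mul_pow, ← pow_mul, prod_pow, mul_assoc]
  calc |(|∑ i, latticeDot ω (n i)|⁻¹ * f n)| * ∏ i, japaneseBracket (n i) ^ M
      = |∑ i, latticeDot ω (n i)|⁻¹ * (|f n| * ∏ i, japaneseBracket (n i) ^ M) := by
        rw [abs_mul, abs_inv, abs_abs, mul_assoc]
    _ ≤ (c⁻¹ * 2 ^ (k * ⌈μ⌉₊) * ∏ i, japaneseBracket (n i) ^ ⌈μ⌉₊) *
          (|f n| * ∏ i, japaneseBracket (n i) ^ M) :=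
        mul_le_mul_of_nonneg_right hinv
          (mul_nonneg (abs_nonneg _) (prod_japaneseBracket_pow_pos _ _ _).le)
    _ = c⁻¹ * 2 ^ (k * ⌈μ⌉₊) * (|f n| * ∏ i, japaneseBracket (n i) ^ (M + ⌈μ⌉₊)) := by
        rw [prod_congr rfl fun i _ => pow_add _ _ _, prod_mul_distrib]
        ring
    _ ≤ c⁻¹ * 2 ^ (k * ⌈μ⌉₊) * C := by
        gcongr
        exact hC n

end RapidlyDecreasing

end RapidDecay

section Weight

variable {d : ℕ} {ω : Fin d → ℝ} {w : ℝ → ℝ}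

theorem rapidlyDecreasing_weight (hw : ∀ t, 0 ≤ w t)
    (hdecay : ∀ N : ℕ, ∃ C : ℝ, ∀ n : Fin d → ℤ,
      w (latticeDot ω n) ≤ C * japaneseBracket n ^ (-(N : ℝ))) :
    RapidlyDecreasing fun n : Fin 1 → Fin d → ℤ => w (latticeDot ω (n 0)) := by
  intro M
  obtain ⟨C, hC⟩ := hdecay M
  refine ⟨C, fun n => ?_⟩
  rw [Fin.prod_univ_one, abs_of_nonneg (hw _), ← le_div_iff₀ (pow_pos (japaneseBracket_pos _) _),
    div_eq_mul_inv, ← Real.rpow_natCast, ← Real.rpow_neg (japaneseBracket_pos _).le]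
  exact hC (n 0)

theorem rapidlyDecreasing_sW {c μ : ℝ} (hω : IsDiophantine ω c μ)
    (hw : RapidlyDecreasing fun n : Fin 1 → Fin d → ℤ => w (latticeDot ω (n 0))) :
    ∀ k, RapidlyDecreasing fun n : Fin k → Fin d → ℤ => sW w k fun i => latticeDot ω (n i)
  | 0 => fun _ => ⟨1, by simp [sW]⟩
  | 1 => by
    simpa only [sW_one, Fin.sum_univ_one] using hw.inv_abs_latticeDot_mul hω
  | k + 2 => by
    simp only [sW_add_two]
    refine .inv_abs_latticeDot_mul hω (.sum _ fun p _ => .sum _ fun c hc => ?_)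
    have hblocks : ∀ i, c.blocksFun i < k + 2 := fun i => by
      have := (mem_filter.1 hc).2 i
      have := c.one_le_blocksFun i
      omega
    exact (RapidlyDecreasing.prod_blocks (f := fun b n => sW w b fun i => latticeDot ω (n i))
      fun i => rapidlyDecreasing_sW hω hw (c.blocksFun i)).comp_perm p
termination_by k => k
decreasing_by exact hblocks i

end Weight

theorem stmt6 (d : ℕ) (ω : Fin d → ℝ)
    (hdio : ∃ c : ℝ, 0 < c ∧ ∃ μ : ℝ, 0 < μ ∧ ∀ n : Fin d → ℤ, n ≠ 0 →
      c * (Real.sqrt (∑ i, ((n i : ℝ)) ^ 2)) ^ (-μ) < |∑ i, (n i : ℝ) * ω i|)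
    (w : ℝ → ℝ) (hw : ∀ t, 0 ≤ w t)
    (hdecay : ∀ N : ℕ, ∃ C : ℝ, 0 < C ∧ ∀ n : Fin d → ℤ,
      w (∑ j, (n j : ℝ) * ω j) ≤ C * (Real.sqrt (1 + ∑ j, ((n j : ℝ)) ^ 2)) ^ (-(N : ℝ))) :
    Function.Injective (fun n : Fin d → ℤ => ∑ j, (n j : ℝ) * ω j) ∧
    ∀ k : ℕ, Summable (fun n : Fin k → Fin d → ℤ =>
      sW w k (fun i => ∑ j, (n i j : ℝ) * ω j)) := by
  obtain ⟨c, hc, μ, hμ, hdio⟩ := hdio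
  have hω : IsDiophantine ω c μ := ⟨hc, hμ, hdio⟩
  have hweight := rapidlyDecreasing_weight hw fun N => (hdecay N).imp fun _ hC => hC.2
  exact ⟨hω.latticeDot_injective, fun k => (rapidlyDecreasing_sW hω hweight k).summable⟩
end

section
/- Let {m_n}_{n=1}^∞ ⊂ ℤ be a sequence whose set of values contains 0 and is symmetric ({m_n} = {−m_n}), set θ_n := m_n/n and Θ := {θ_n : n ≥ 1}. Then: (i) if θ_{n_1} + … + θ_{n_k} ≠ 0 for indices n_1,…,n_k, then |θ_{n_1}+…+θ_{n_k}| ≥ 1/(n_1 n_2 ⋯ n_k); (ii) if w : Θ → [0,∞) is a weight such that for every N ≥ 0 there is C_N > 0 with w(θ_n) ≤ C_N ⟨max(n, |m_n|/n)⟩^{−N} for all n ≥ 1, then for every k ≥ 0 the sum over all tuples (n_1,…,n_k) of s_k((θ_{n_1},…,θ_{n_k})), computed with the weight w, is finite. -/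
open scoped BigOperators

/-- Japanese bracket `⟨t⟩ = (1+t²)^{1/2}`. -/
noncomputable def jap (t : ℝ) : ℝ := Real.sqrt (1 + t ^ 2)

/-! Clearing denominators, `(∏ nᵢ) · ∑ m_{nᵢ}/nᵢ` is an integer, so a nonzero sum of frequencies
has modulus at least `1/∏ nᵢ`. The factor `|θ₁ + ⋯ + θₖ|⁻¹` in the recursion for `s_k` therefore
costs at most one power of `∏ nᵢ`, while the blocks of each composition partition the indices; by
strong induction on `k`, `s_k` decays faster than every power of `∏ nᵢ` once `w` does, and decay
like `∏ nᵢ⁻²` is summable over `(ℕ+)ᵏ`. -/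

theorem one_div_prod_le_abs_sum_intCast_div {ι : Type*} (s : Finset ι) (a : ι → ℤ) (d : ι → ℕ)
    (hd : ∀ i ∈ s, 0 < d i) (hS : ∑ i ∈ s, (a i : ℝ) / d i ≠ 0) :
    1 / ∏ i ∈ s, (d i : ℝ) ≤ |∑ i ∈ s, (a i : ℝ) / d i| := by
  classical
  have hP : 0 < ∏ i ∈ s, (d i : ℝ) := Finset.prod_pos fun i hi => by exact_mod_cast hd i hi
  have hclear : (∏ i ∈ s, (d i : ℝ)) * ∑ i ∈ s, (a i : ℝ) / d i =
      ((∑ i ∈ s, a i * ∏ j ∈ s.erase i, (d j : ℤ) : ℤ) : ℝ) := by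
    push_cast
    rw [Finset.mul_sum]
    refine Finset.sum_congr rfl fun i hi => ?_
    have hdi : (d i : ℝ) ≠ 0 := by exact_mod_cast (hd i hi).ne'
    rw [← Finset.mul_prod_erase _ _ hi]
    field_simp
  have hz : ∑ i ∈ s, a i * ∏ j ∈ s.erase i, (d j : ℤ) ≠ 0 := by
    rw [← Int.cast_ne_zero (α := ℝ), ← hclear]
    exact mul_ne_zero hP.ne' hS
  have h1 : 1 ≤ (∏ i ∈ s, (d i : ℝ)) * |∑ i ∈ s, (a i : ℝ) / d i| := by
    rw [← abs_of_pos hP, ← abs_mul, hclear, ← Int.cast_abs]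
    exact_mod_cast Int.one_le_abs hz
  rw [div_le_iff₀ hP]
  linarith

theorem le_jap (t : ℝ) : t ≤ jap t :=
  calc t ≤ |t| := le_abs_self t
    _ = Real.sqrt (t ^ 2) := (Real.sqrt_sq_eq_abs t).symm
    _ ≤ jap t := Real.sqrt_le_sqrt (by linarith)

theorem jap_max_rpow_neg_le {x : ℝ} (hx : 0 < x) (t : ℝ) (N : ℕ) :
    jap (max x t) ^ (-(N : ℝ)) ≤ (x ^ N)⁻¹ :=
  calc jap (max x t) ^ (-(N : ℝ)) ≤ x ^ (-(N : ℝ)) :=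
        Real.rpow_le_rpow_of_nonpos hx ((le_max_left x t).trans (le_jap _)) (by simp)
    _ = (x ^ N)⁻¹ := by rw [Real.rpow_neg hx.le, Real.rpow_natCast]

theorem Composition.prod_prod_blocks_perm {M : Type*} [CommMonoid M] {n : ℕ} (c : Composition n)
    (p : Equiv.Perm (Fin n)) (f : Fin n → M) :
    ∏ i : Fin c.length, ∏ j : Fin (c.blocksFun i), f (p (c.embedding i j)) = ∏ a, f a := by
  rw [← Fintype.prod_equiv (c.blocksFinEquiv.trans p) (fun x => f (p (c.embedding x.1 x.2))) f
    fun _ => rfl, Fintype.prod_sigma]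

theorem summable_fin_pi_prod_of_nonneg {α : Type*} {f : α → ℝ} (hf : Summable f) (hf0 : 0 ≤ f) :
    ∀ k : ℕ, Summable fun n : Fin k → α => ∏ i, f (n i)
  | 0 => by
    have : Finite (Fin 0 → α) := Finite.of_subsingleton
    exact Summable.of_finite
  | k + 1 => by
    rw [← Equiv.summable_iff (Fin.consEquiv fun _ => α)]
    refine (hf.mul_of_nonneg (summable_fin_pi_prod_of_nonneg hf hf0 k) hf0
      fun n => Finset.prod_nonneg fun i _ => hf0 _).congr fun x => ?_
    simp [Fin.prod_univ_succ]

section sW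

variable {w : ℝ → ℝ}

theorem sW_nonneg (hw : ∀ t, 0 ≤ w t) : ∀ k (θ : Fin k → ℝ), 0 ≤ sW w k θ
  | 0, θ => by simp [sW]
  | 1, θ => by
    rw [sW]
    split_ifs
    · exact le_rfl
    · exact div_nonneg (hw _) (abs_nonneg _)
  | k + 2, θ => by
    rw [sW]
    split_ifs
    · exact le_rfl
    refine mul_nonneg (by positivity) (Finset.sum_nonneg fun p _ => Finset.sum_nonneg fun c _ => ?_)
    split_ifs with h
    · refine Finset.prod_nonneg fun i _ => ?_
      have : c.blocksFun i < k + 2 := by have := h i; omega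
      exact sW_nonneg hw _ _
    · exact le_rfl

variable {α : Type*} {θ ν : α → ℝ}

def SumSeparated (θ ν : α → ℝ) : Prop :=
  ∀ k (n : Fin k → α), ∑ i, θ (n i) ≠ 0 → 1 / ∏ i, ν (n i) ≤ |∑ i, θ (n i)|

theorem sW_one_le (hν : ∀ a, 0 < ν a)
    (hsep : SumSeparated θ ν)
    {N : ℕ} {C : ℝ} (hC : 0 ≤ C) (hwθ : ∀ a, w (θ a) ≤ C * (ν a ^ (N + 1))⁻¹) (n : Fin 1 → α) :
    sW w 1 (fun i => θ (n i)) ≤ C * ∏ i, (ν (n i) ^ N)⁻¹ := by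
  have hν0 := hν (n 0)
  rw [sW, Fin.prod_univ_one]
  split_ifs with hθ
  · positivity
  have hinv : |θ (n 0)|⁻¹ ≤ ν (n 0) :=
    inv_le_of_inv_le₀ hν0 (by simpa using hsep 1 n (by simpa using hθ))
  calc w (θ (n 0)) / |θ (n 0)| ≤ C * (ν (n 0) ^ (N + 1))⁻¹ * ν (n 0) := by
        rw [div_eq_mul_inv]
        exact mul_le_mul (hwθ _) hinv (by positivity) (by positivity)
    _ = C * (ν (n 0) ^ N)⁻¹ := by
        rw [pow_succ, mul_inv, mul_assoc, mul_assoc, inv_mul_cancel₀ hν0.ne', mul_one]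

theorem prod_sW_blocks_le (hw : ∀ t, 0 ≤ w t) (hν : ∀ a, 0 < ν a) {K N : ℕ} {D : ℝ} (hD : 1 ≤ D)
    (hlow : ∀ b < K, ∀ n : Fin b → α, sW w b (fun i => θ (n i)) ≤ D * ∏ i, (ν (n i) ^ N)⁻¹)
    (n : Fin K → α) (p : Equiv.Perm (Fin K)) (c : Composition K) (hc : ∀ i, c.blocksFun i < K) :
    ∏ i, sW w (c.blocksFun i) (fun j => θ (n (p (c.embedding i j)))) ≤
      D ^ K * ∏ a, (ν (n a) ^ N)⁻¹ :=
  calc ∏ i, sW w (c.blocksFun i) (fun j => θ (n (p (c.embedding i j))))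
      ≤ ∏ i, (D * ∏ j : Fin (c.blocksFun i), (ν (n (p (c.embedding i j))) ^ N)⁻¹) :=
        Finset.prod_le_prod (fun i _ => sW_nonneg hw _ _) fun i _ => hlow _ (hc i) _
    _ = D ^ c.length * ∏ a, (ν (n a) ^ N)⁻¹ := by
        rw [Finset.prod_mul_distrib, Finset.prod_const, Finset.card_univ, Fintype.card_fin,
          c.prod_prod_blocks_perm p fun a => (ν (n a) ^ N)⁻¹]
    _ ≤ D ^ K * ∏ a, (ν (n a) ^ N)⁻¹ :=
        mul_le_mul_of_nonneg_right (pow_le_pow_right₀ hD c.length_le)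
          (Finset.prod_nonneg fun a _ => inv_nonneg.2 (pow_nonneg (hν _).le _))

theorem sW_add_two_le (hw : ∀ t, 0 ≤ w t) (hν : ∀ a, 0 < ν a)
    (hsep : SumSeparated θ ν)
    {k N : ℕ} {D : ℝ} (hD : 1 ≤ D)
    (hlow : ∀ b < k + 2, ∀ n : Fin b → α,
      sW w b (fun i => θ (n i)) ≤ D * ∏ i, (ν (n i) ^ (N + 1))⁻¹)
    (n : Fin (k + 2) → α) :
    sW w (k + 2) (fun i => θ (n i)) ≤
      (Fintype.card (Equiv.Perm (Fin (k + 2))) * Fintype.card (Composition (k + 2)) : ℕ) *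
        D ^ (k + 2) * ∏ i, (ν (n i) ^ N)⁻¹ := by
  set K : ℝ :=
    ((Fintype.card (Equiv.Perm (Fin (k + 2))) * Fintype.card (Composition (k + 2)) : ℕ) : ℝ)
  have hP : 0 < ∏ i, ν (n i) := Finset.prod_pos fun i _ => hν _
  have hQ : ∀ M, 0 ≤ ∏ i, (ν (n i) ^ M)⁻¹ :=
    fun M => Finset.prod_nonneg fun i _ => inv_nonneg.2 (pow_nonneg (hν _).le _)
  rw [sW]
  split_ifs with hS
  · exact mul_nonneg (by positivity) (hQ N)
  have hinv : |∑ i, θ (n i)|⁻¹ ≤ ∏ i, ν (n i) :=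
    inv_le_of_inv_le₀ hP (by rw [← one_div]; exact hsep _ n hS)
  have hterm : ∀ (p : Equiv.Perm (Fin (k + 2))) (c : Composition (k + 2)),
      (if h : ∀ i : Fin c.length, 2 * c.blocksFun i ≤ k + 2 then
        ∏ i, sW w (c.blocksFun i) (fun j => θ (n (p (c.embedding i j)))) else 0) ≤
        D ^ (k + 2) * ∏ i, (ν (n i) ^ (N + 1))⁻¹ := by
    intro p c
    split_ifs with hc
    · exact prod_sW_blocks_le hw hν hD hlow n p c fun i => by have := hc i; omega
    · exact mul_nonneg (by positivity) (hQ _)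
  have hsum := Finset.sum_le_sum fun p (_ : p ∈ Finset.univ) =>
    Finset.sum_le_sum fun c (_ : c ∈ Finset.univ) => hterm p c
  simp only [Finset.sum_const, Finset.card_univ, nsmul_eq_mul] at hsum
  calc |∑ i, θ (n i)|⁻¹ * _
      ≤ |∑ i, θ (n i)|⁻¹ * (K * (D ^ (k + 2) * ∏ i, (ν (n i) ^ (N + 1))⁻¹)) :=
        mul_le_mul_of_nonneg_left (hsum.trans_eq (by push_cast [K]; ring)) (by positivity)
    _ ≤ (∏ i, ν (n i)) * (K * (D ^ (k + 2) * ∏ i, (ν (n i) ^ (N + 1))⁻¹)) :=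
        mul_le_mul_of_nonneg_right hinv (by have := hQ (N + 1); positivity)
    _ = K * D ^ (k + 2) * ∏ i, (ν (n i) ^ N)⁻¹ := by
        rw [mul_left_comm, mul_left_comm _ (D ^ (k + 2)), ← Finset.prod_mul_distrib, ← mul_assoc]
        congr 2 with i
        rw [pow_succ, mul_inv, mul_left_comm, mul_inv_cancel₀ (hν _).ne', mul_one]

theorem sW_le_mul_prod_inv_pow (hw : ∀ t, 0 ≤ w t) (hν : ∀ a, 0 < ν a)
    (hsep : SumSeparated θ ν)
    (hwθ : ∀ N : ℕ, ∃ C, 0 ≤ C ∧ ∀ a, w (θ a) ≤ C * (ν a ^ N)⁻¹) :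
    ∀ k N : ℕ, ∃ C, ∀ n : Fin k → α, sW w k (fun i => θ (n i)) ≤ C * ∏ i, (ν (n i) ^ N)⁻¹
  | 0, _ => ⟨1, fun _ => by simp [sW]⟩
  | 1, N =>
    let ⟨C, hC, hCw⟩ := hwθ (N + 1)
    ⟨C, sW_one_le hν hsep hC hCw⟩
  | k + 2, N => by
    choose C hC using fun b : Fin (k + 2) => sW_le_mul_prod_inv_pow hw hν hsep hwθ b (N + 1)
    refine ⟨_, sW_add_two_le hw hν hsep (D := 1 + ∑ b, |C b|)
      (le_add_of_nonneg_right (Finset.sum_nonneg fun b _ => abs_nonneg _)) fun b hb n => ?_⟩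
    have hCD : C ⟨b, hb⟩ ≤ 1 + ∑ b, |C b| :=
      (le_abs_self _).trans <| (Finset.single_le_sum (fun b _ => abs_nonneg (C b))
        (Finset.mem_univ _)).trans (le_add_of_nonneg_left zero_le_one)
    exact (hC ⟨b, hb⟩ n).trans (mul_le_mul_of_nonneg_right hCD
      (Finset.prod_nonneg fun i _ => inv_nonneg.2 (pow_nonneg (hν _).le _)))

end sW

theorem stmt7_general (m : ℕ+ → ℤ) :
    -- (i) lower bound on nonzero sums
    (∀ (k : ℕ) (n : Fin k → ℕ+),
      (∑ i, (m (n i) : ℝ) / (n i : ℕ)) ≠ 0 →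
      1 / (∏ i, ((n i : ℕ) : ℝ)) ≤ |∑ i, (m (n i) : ℝ) / (n i : ℕ)|) ∧
    -- (ii) summability for rapidly decaying weights
    (∀ w : ℝ → ℝ, (∀ t, 0 ≤ w t) →
      (∀ N : ℕ, ∃ C : ℝ, 0 < C ∧ ∀ n : ℕ+,
        w ((m n : ℝ) / (n : ℕ)) ≤
          C * jap (max ((n : ℕ) : ℝ) (|(m n : ℝ)| / (n : ℕ))) ^ (-(N : ℝ))) →
      ∀ k : ℕ, Summable (fun n : Fin k → ℕ+ =>
        sW w k (fun i => (m (n i) : ℝ) / (n i : ℕ)))) := by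
  have hsep : SumSeparated (fun n : ℕ+ => (m n : ℝ) / (n : ℕ)) (fun n => (n : ℕ)) := fun k n hS =>
    one_div_prod_le_abs_sum_intCast_div _ (fun i => m (n i)) (fun i => n i)
      (fun i _ => (n i).pos) hS
  refine ⟨hsep, fun w hw hwθ k => ?_⟩
  have hwθ' : ∀ N : ℕ, ∃ C, 0 ≤ C ∧ ∀ n : ℕ+,
      w ((m n : ℝ) / (n : ℕ)) ≤ C * ((((n : ℕ) : ℝ)) ^ N)⁻¹ := fun N =>
    let ⟨C, hC, hCw⟩ := hwθ N
    ⟨C, hC.le, fun n => (hCw n).trans <|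
      mul_le_mul_of_nonneg_left (jap_max_rpow_neg_le (by positivity) _ N) hC.le⟩
  obtain ⟨C, hC⟩ := sW_le_mul_prod_inv_pow hw (fun n : ℕ+ => by positivity) hsep hwθ' k 2
  have hsum : Summable fun n : ℕ+ => ((((n : ℕ) : ℝ)) ^ 2)⁻¹ :=
    (Real.summable_nat_pow_inv.2 one_lt_two).comp_injective PNat.coe_injective
  exact Summable.of_nonneg_of_le (fun n => sW_nonneg hw _ _) hC
    ((summable_fin_pi_prod_of_nonneg hsum (fun n => by positivity) k).mul_left C)

theorem stmt7 (m : ℕ+ → ℤ)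
    (h0 : ∃ n : ℕ+, m n = 0) (hsym : ∀ n : ℕ+, ∃ n' : ℕ+, m n' = -m n) :
    -- (i) lower bound on nonzero sums
    (∀ (k : ℕ) (n : Fin k → ℕ+),
      (∑ i, (m (n i) : ℝ) / (n i : ℕ)) ≠ 0 →
      1 / (∏ i, ((n i : ℕ) : ℝ)) ≤ |∑ i, (m (n i) : ℝ) / (n i : ℕ)|) ∧
    -- (ii) summability for rapidly decaying weights
    (∀ w : ℝ → ℝ, (∀ t, 0 ≤ w t) →
      (∀ N : ℕ, ∃ C : ℝ, 0 < C ∧ ∀ n : ℕ+,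
        w ((m n : ℝ) / (n : ℕ)) ≤
          C * jap (max ((n : ℕ) : ℝ) (|(m n : ℝ)| / (n : ℕ))) ^ (-(N : ℝ))) →
      ∀ k : ℕ, Summable (fun n : Fin k → ℕ+ =>
        sW w k (fun i => (m (n i) : ℝ) / (n i : ℕ)))) :=
  stmt7_general m
end
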